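/- arXiv:2209.00530 — 6 statements merged into one kernel-verified Lean document; each statement's English description precedes it below -/
import Mathlib

section
/- Let E, ℓ : (Fin m → ℂ) × (Fin n → ℂ) → ℂ be complex-differentiable (holomorphic) on an open set, let W ⊆ (Fin m → ℂ) × ℂ be an open set containing (θ₀, 0), and let s : (Fin m → ℂ) × ℂ → (Fin n → ℂ) be complex-differentiable on W. Assume the fixed-point condition: for every (θ, β) ∈ W, the Fréchet derivative over ℂ of the map x ↦ E(θ, x) + β • ℓ(θ, x) at x = s(θ, β) is the zero continuous linear map. Define the objective L : (Fin m → ℂ) → ℂ by L(θ) = ℓ(θ, s(θ, 0)). Then the gradient formula of equilibrium propagation holds in the sense of complex differentiation: the derivative at β = 0 of the map β ↦ fderiv ℂ (fun θ' => E(θ', s(θ₀, β)) + β • ℓ(θ', s(θ₀, β))) θ₀ (a curve in the space of continuous ℂ-linear maps (Fin m → ℂ) →L[ℂ] ℂ) equals fderiv ℂ L θ₀. -/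
/-!
Let `Ψ (θ, β) = E (θ, s (θ, β)) + β • ℓ (θ, s (θ, β))`. Since `s (θ, β)` is a critical point of
the total energy in the state variable, the partial derivatives of `Ψ` are those of the total
energy with the state frozen (envelope theorem): `∂_θ Ψ (θ₀, β)` is the curve differentiated in
the theorem and `∂_β Ψ (θ, 0) = L θ`. The theorem is thus the symmetry of the mixed partials
of the holomorphic map `Ψ`.

Instead of making `Ψ` of class `C²` through Hartogs' theorem, we prove the symmetry on each
complex line `t ↦ θ₀ + t • v`. There the slopes in `t` converge to `∂_t` uniformly
in `β`, with error `O(|t|)` by the Schwarz lemma applied to `dslope`; being holomorphic in `β`,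
their `β`-derivatives converge too (Weierstrass), and those are slopes of `∂_β`.
-/

open Metric Set Filter Topology

section Envelope

variable {𝕜 X Y G : Type*} [NontriviallyNormedField 𝕜] [NormedAddCommGroup X] [NormedSpace 𝕜 X]
  [NormedAddCommGroup Y] [NormedSpace 𝕜 Y] [NormedAddCommGroup G] [NormedSpace 𝕜 G]

theorem hasFDerivAt_envelope {F : X × Y → G} {σ : X → Y} {x : X}
    (hF : DifferentiableAt 𝕜 F (x, σ x)) (hσ : DifferentiableAt 𝕜 σ x)
    (hcrit : fderiv 𝕜 (fun y => F (x, y)) (σ x) = 0) :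
    HasFDerivAt (fun x' => F (x', σ x')) (fderiv 𝕜 (fun x' => F (x', σ x)) x) x := by
  set F' := fderiv 𝕜 F (x, σ x)
  have hpartial_fst : fderiv 𝕜 (fun x' => F (x', σ x)) x = F'.comp (.inl 𝕜 X Y) :=
    (hF.hasFDerivAt.comp x (hasFDerivAt_prodMk_left x (σ x))).fderiv
  have hpartial_snd : F'.comp (.inr 𝕜 X Y) = 0 :=
    (hF.hasFDerivAt.comp (σ x) (hasFDerivAt_prodMk_right x (σ x))).fderiv ▸ hcrit
  refine (hF.hasFDerivAt.comp x ((hasFDerivAt_id x).prodMk hσ.hasFDerivAt)).congr_fderiv ?_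
  rw [hpartial_fst]
  ext v
  have hv : F' (0, fderiv 𝕜 σ x v) = 0 := congr($hpartial_snd (fderiv 𝕜 σ x v))
  change F' (v, fderiv 𝕜 σ x v) = F' (v, 0)
  rw [← add_zero (F' (v, 0)), ← hv, ← map_add, Prod.mk_add_mk, add_zero, zero_add]

end Envelope

theorem hasDerivAt_of_forall_hasDerivAt_apply {𝕜 F ι : Type*} [NontriviallyNormedField 𝕜]
    [CompleteSpace 𝕜] [NormedAddCommGroup F] [NormedSpace 𝕜 F] [Fintype ι] [DecidableEq ι]
    {A : 𝕜 → (ι → 𝕜) →L[𝕜] F} {D : (ι → 𝕜) →L[𝕜] F} {b : 𝕜}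
    (h : ∀ v, HasDerivAt (fun β => A β v) (D v) b) : HasDerivAt A D b := by
  set e := ContinuousLinearEquiv.piRing (𝕜 := 𝕜) (E := F) ι
  have he : HasDerivAt (fun β => e (A β)) (e D) b :=
    hasDerivAt_pi.mpr fun i => h (Pi.single i 1)
  simpa [Function.comp_def] using e.symm.hasFDerivAt.comp_hasDerivAt b he

namespace Complex

variable {E : Type*} [NormedAddCommGroup E] [NormedSpace ℂ E] [CompleteSpace E]

theorem dist_dslope_deriv_le_of_mapsTo_ball {f : ℂ → E} {c z : ℂ} {R₁ R₂ : ℝ}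
    (hd : DifferentiableOn ℂ f (ball c R₁)) (h_maps : MapsTo f (ball c R₁) (closedBall (f c) R₂))
    (hz : z ∈ ball c R₁) :
    dist (dslope f c z) (deriv f c) ≤ 2 * R₂ / R₁ ^ 2 * dist z c := by
  have hR₁ : 0 < R₁ := nonempty_ball.mp ⟨z, hz⟩
  have hslope : DifferentiableOn ℂ (dslope f c) (ball c R₁) :=
    (differentiableOn_dslope (ball_mem_nhds c hR₁)).mpr hd
  have hbound : ∀ w ∈ ball c R₁, ‖dslope f c w‖ ≤ R₂ / R₁ := fun _ hw =>
    norm_dslope_le_div_of_mapsTo_ball hd h_maps hw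
  have hslope_maps : MapsTo (dslope f c) (ball c R₁) (closedBall (dslope f c c) (2 * R₂ / R₁)) :=
    fun w hw => calc
      dist (dslope f c w) (dslope f c c) ≤ ‖dslope f c w‖ + ‖dslope f c c‖ :=
        dist_le_norm_add_norm _ _
      _ ≤ R₂ / R₁ + R₂ / R₁ := add_le_add (hbound w hw) (hbound c (mem_ball_self hR₁))
      _ = 2 * R₂ / R₁ := by ring
  calc dist (dslope f c z) (deriv f c)
      = dist (dslope f c z) (dslope f c c) := by rw [dslope_same]
    _ ≤ 2 * R₂ / R₁ / R₁ * dist z c := dist_le_div_mul_dist_of_mapsTo_ball hslope hslope_maps hz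
    _ = 2 * R₂ / R₁ ^ 2 * dist z c := by ring

theorem tendstoUniformlyOn_dslope_fst {K : ℂ × ℂ → E} {a b : ℂ} {r : ℝ} (hr : 0 < r)
    (hK : DifferentiableOn ℂ K (closedBall (a, b) r)) :
    TendstoUniformlyOn (fun t β => dslope (fun t' => K (t', β)) a t)
      (fun β => deriv (fun t => K (t, β)) a) (𝓝 a) (ball b r) := by
  obtain ⟨M, hM⟩ := (isCompact_closedBall (a, b) r).exists_bound_of_continuousOn hK.continuousOn
  have hmem : ∀ t ∈ ball a r, ∀ β ∈ ball b r, (t, β) ∈ closedBall (a, b) r := fun t ht β hβ =>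
    ball_subset_closedBall (ball_prod_same a b r ▸ mk_mem_prod ht hβ)
  have hslope : ∀ β ∈ ball b r, ∀ t ∈ ball a r,
      dist (dslope (fun t' => K (t', β)) a t) (deriv (fun t => K (t, β)) a)
        ≤ 2 * (2 * M) / r ^ 2 * dist t a := by
    intro β hβ t ht
    refine dist_dslope_deriv_le_of_mapsTo_ball ?_ (fun t' ht' => ?_) ht
    · exact hK.comp (differentiable_id.prodMk (differentiable_const β)).differentiableOn
        fun t' ht' => hmem t' ht' β hβ
    · calc dist (K (t', β)) (K (a, β)) ≤ ‖K (t', β)‖ + ‖K (a, β)‖ := dist_le_norm_add_norm _ _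
        _ ≤ M + M := add_le_add (hM _ (hmem t' ht' β hβ)) (hM _ (hmem a (mem_ball_self hr) β hβ))
        _ = 2 * M := by ring
  have hlim : Tendsto (fun t => 2 * (2 * M) / r ^ 2 * dist t a) (𝓝 a) (𝓝 0) :=
    (continuous_const.mul (continuous_id.dist continuous_const)).tendsto' a 0 (by simp)
  rw [Metric.tendstoUniformlyOn_iff]
  intro ε hε
  filter_upwards [hlim.eventually (gt_mem_nhds hε), ball_mem_nhds a hr] with t hε' ht β hβ
  rw [dist_comm]
  exact (hslope β hβ t ht).trans_lt hε'

theorem hasDerivAt_deriv_fst_of_hasDerivAt_deriv_snd {K : ℂ × ℂ → E} {a b : ℂ} {d : E}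
    (hK : ∀ᶠ q in 𝓝 (a, b), DifferentiableAt ℂ K q)
    (hd : HasDerivAt (fun t => deriv (fun β => K (t, β)) b) d a) :
    HasDerivAt (fun β => deriv (fun t => K (t, β)) a) d b := by
  obtain ⟨ε, hε, hKε⟩ := Metric.eventually_nhds_iff_ball.mp hK
  set r := ε / 2
  have hr : 0 < r := half_pos hε
  have hKr : ∀ q ∈ closedBall (a, b) r, DifferentiableAt ℂ K q := fun q hq =>
    hKε q (closedBall_subset_ball (half_lt_self hε) hq)
  have hslice : ∀ t ∈ ball a r, ∀ β ∈ ball b r, DifferentiableAt ℂ (fun β => K (t, β)) β :=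
    fun t ht β hβ =>
      (hKr _ (ball_subset_closedBall (ball_prod_same a b r ▸ mk_mem_prod ht hβ))).comp β
        ((differentiableAt_const t).prodMk differentiableAt_id)
  set Φ := fun t β => dslope (fun t' => K (t', β)) a t
  set g := fun β => deriv (fun t => K (t, β)) a
  set P := fun t => deriv (fun β => K (t, β)) b
  have hΦ : ∀ t ≠ a, Φ t = fun β => (t - a)⁻¹ • (K (t, β) - K (a, β)) := fun t hta =>
    funext fun β => by simp only [Φ, dslope_of_ne _ hta, slope_def_module]
  have hlim : TendstoLocallyUniformlyOn Φ g (𝓝[≠] a) (ball b r) :=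
    TendstoUniformlyOn.tendstoLocallyUniformlyOn fun u hu =>
      (tendstoUniformlyOn_dslope_fst hr (fun q hq => (hKr q hq).differentiableWithinAt) u hu)
        |>.filter_mono nhdsWithin_le_nhds
  have hnear : ∀ᶠ t in 𝓝[≠] a, t ∈ ball a r ∧ t ≠ a :=
    inter_mem (nhdsWithin_le_nhds (ball_mem_nhds a hr)) self_mem_nhdsWithin
  have hΦdiff : ∀ᶠ t in 𝓝[≠] a, DifferentiableOn ℂ (Φ t) (ball b r) := by
    filter_upwards [hnear] with t ⟨ht, hta⟩
    rw [hΦ t hta]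
    exact fun β hβ => (((hslice t ht β hβ).sub
      (hslice a (mem_ball_self hr) β hβ)).const_smul _).differentiableWithinAt
  have hΦderiv : ∀ᶠ t in 𝓝[≠] a, deriv (Φ t) b = slope P a t := by
    filter_upwards [hnear] with t ⟨ht, hta⟩
    rw [hΦ t hta, slope_def_module]
    exact (((hslice t ht b (mem_ball_self hr)).hasDerivAt.sub
      (hslice a (mem_ball_self hr) b (mem_ball_self hr)).hasDerivAt).const_smul _).deriv
  have hg : DifferentiableOn ℂ g (ball b r) := hlim.differentiableOn hΦdiff isOpen_ball
  have hderiv_g : deriv g b = d :=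
    tendsto_nhds_unique
      (((hlim.deriv hΦdiff isOpen_ball).tendsto_at (mem_ball_self hr)).congr' hΦderiv)
      (hasDerivAt_iff_tendsto_slope.mp hd)
  exact hderiv_g ▸ (hg.differentiableAt (ball_mem_nhds b hr)).hasDerivAt

theorem hasDerivAt_fderiv_fst_of_differentiableAt_deriv_snd {ι : Type*} [Fintype ι]
    {Ψ : (ι → ℂ) × ℂ → E} {θ₀ : ι → ℂ} {b : ℂ}
    (hΨ : ∀ᶠ p in 𝓝 (θ₀, b), DifferentiableAt ℂ Ψ p)
    (hd : DifferentiableAt ℂ (fun θ => deriv (fun β => Ψ (θ, β)) b) θ₀) :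
    HasDerivAt (fun β => fderiv ℂ (fun θ => Ψ (θ, β)) θ₀)
      (fderiv ℂ (fun θ => deriv (fun β => Ψ (θ, β)) b) θ₀) b := by
  classical
  refine hasDerivAt_of_forall_hasDerivAt_apply fun v => ?_
  have hline : Tendsto (fun q : ℂ × ℂ => (θ₀ + q.1 • v, q.2)) (𝓝 (0, b)) (𝓝 (θ₀, b)) :=
    (by fun_prop : Continuous fun q : ℂ × ℂ => (θ₀ + q.1 • v, q.2)).tendsto' _ _ (by simp)
  have hK : ∀ᶠ q in 𝓝 ((0 : ℂ), b), DifferentiableAt ℂ (fun q : ℂ × ℂ => Ψ (θ₀ + q.1 • v, q.2)) q :=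
    (hline.eventually hΨ).mono fun q hq => hq.comp q (by fun_prop)
  have hslice : ∀ᶠ β in 𝓝 b, DifferentiableAt ℂ (fun θ => Ψ (θ, β)) θ₀ :=
    ((continuous_const.prodMk continuous_id).tendsto b |>.eventually hΨ).mono fun β hβ =>
      hβ.comp θ₀ (differentiableAt_id.prodMk (differentiableAt_const β))
  refine (hasDerivAt_deriv_fst_of_hasDerivAt_deriv_snd hK
    (hd.hasFDerivAt.hasLineDerivAt v)).congr_of_eventuallyEq ?_
  filter_upwards [hslice] with β hβ
  exact (hβ.hasFDerivAt.hasLineDerivAt v).deriv.symm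

end Complex

/-- Holomorphic Equilibrium Propagation (Lemma 1): for total energy
`F(θ, x, β) = E(θ, x) + β • ℓ(θ, x)` with holomorphic `E`, `ℓ` and a holomorphic
fixed-point map `s`, the derivative at `β = 0` of the θ-partial derivative of the
total energy evaluated at the fixed point equals the gradient of the objective
`L(θ) = ℓ(θ, s(θ, 0))`. -/
theorem holomorphic_equilibrium_propagation
    {m n : ℕ}
    (E ℓ : (Fin m → ℂ) × (Fin n → ℂ) → ℂ)
    (hE : Differentiable ℂ E) (hℓ : Differentiable ℂ ℓ)
    (W : Set ((Fin m → ℂ) × ℂ)) (hW : IsOpen W)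
    (θ₀ : Fin m → ℂ) (hmem : (θ₀, (0 : ℂ)) ∈ W)
    (s : (Fin m → ℂ) × ℂ → (Fin n → ℂ))
    (hs : DifferentiableOn ℂ s W)
    (hfix : ∀ p ∈ W,
      fderiv ℂ (fun x => E (p.1, x) + p.2 • ℓ (p.1, x)) (s p) = 0)
    (L : (Fin m → ℂ) → ℂ) (hL : L = fun θ => ℓ (θ, s (θ, 0))) :
    deriv (fun β : ℂ =>
        fderiv ℂ (fun θ' => E (θ', s (θ₀, β)) + β • ℓ (θ', s (θ₀, β))) θ₀) 0
      = fderiv ℂ L θ₀ := by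
  subst hL
  have hsW : ∀ p ∈ W, DifferentiableAt ℂ s p := fun p hp => hs.differentiableAt (hW.mem_nhds hp)
  have hΨ : ∀ᶠ p in 𝓝 (θ₀, 0), DifferentiableAt ℂ
      (fun p : (Fin m → ℂ) × ℂ => E (p.1, s p) + p.2 • ℓ (p.1, s p)) p := by
    filter_upwards [hW.mem_nhds hmem] with p hp
    have := hsW p hp
    fun_prop
  have hθ : (fun β => fderiv ℂ (fun θ' => E (θ', s (θ₀, β)) + β • ℓ (θ', s (θ₀, β))) θ₀)
      =ᶠ[𝓝 0] fun β => fderiv ℂ (fun θ => E (θ, s (θ, β)) + β • ℓ (θ, s (θ, β))) θ₀ := by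
    filter_upwards [(continuous_const.prodMk continuous_id).tendsto 0 |>.eventually
      (hW.mem_nhds hmem)] with β hβ
    exact (hasFDerivAt_envelope (F := fun q => E q + β • ℓ q) (σ := fun θ => s (θ, β))
      (by fun_prop) ((hsW _ hβ).comp θ₀ (by fun_prop)) (hfix _ hβ)).fderiv.symm
  have hβ : (fun θ => deriv (fun β => E (θ, s (θ, β)) + β • ℓ (θ, s (θ, β))) 0)
      =ᶠ[𝓝 θ₀] fun θ => ℓ (θ, s (θ, 0)) := by
    filter_upwards [(continuous_id.prodMk continuous_const).tendsto θ₀ |>.eventually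
      (hW.mem_nhds hmem)] with θ hθ
    have hfrozen := hasFDerivAt_envelope
      (F := fun q : ℂ × (Fin n → ℂ) => E (θ, q.2) + q.1 • ℓ (θ, q.2)) (σ := fun β => s (θ, β))
      (by fun_prop) ((hsW _ hθ).comp 0 (by fun_prop)) (hfix _ hθ)
    rw [hfrozen.hasDerivAt.deriv]
    simp
  have hLd : DifferentiableAt ℂ (fun θ => ℓ (θ, s (θ, 0))) θ₀ := by
    have := hsW _ hmem
    fun_prop
  have key := Complex.hasDerivAt_fderiv_fst_of_differentiableAt_deriv_snd hΨ
    (hLd.congr_of_eventuallyEq hβ)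
  exact ((key.congr_of_eventuallyEq hθ).congr_deriv hβ.fderiv_eq).deriv
end

section
/- Let E, ℓ : (Fin m → ℂ) × (Fin n → ℂ) → ℂ be complex-differentiable (holomorphic) on an open set, let W ⊆ (Fin m → ℂ) × ℂ be an open set, let s : (Fin m → ℂ) × ℂ → (Fin n → ℂ) be complex-differentiable on W, and assume that for every (θ, β) ∈ W the Fréchet derivative over ℂ of x ↦ E(θ, x) + β • ℓ(θ, x) at x = s(θ, β) vanishes. Define L(θ) = ℓ(θ, s(θ, 0)). Let r > 0 and T > 0 be such that {θ₀} × {β : ℂ | ‖β‖ ≤ r} ⊆ W, and set β(t) = r·exp(2πi t / T). Then fderiv ℂ L θ₀ = (1/(T·r)) · ∫_{t=0}^{T} (fderiv ℂ (fun θ' => E(θ', s(θ₀, β(t))) + β(t) • ℓ(θ', s(θ₀, β(t)))) θ₀) · exp(−2πi t / T) dt, where the integral is the Bochner integral of a continuous curve in the space (Fin m → ℂ) →L[ℂ] ℂ. -/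
open scoped Real
open Metric Set Complex Filter Topology

/-!
By the envelope theorem, derivatives of `Φ(θ, β) = F(θ, s(θ, β), β)` may be taken with the state
frozen at the fixed point: `∂_β Φ(θ, 0) = L(θ)`, and `∂_θ Φ(θ₀, β)` is the integrand. Hence
`∇L(θ₀) = ∂_β ∂_θ Φ(θ₀, 0)`, and Cauchy's formula for this derivative on the circle `|β| = r`,
parametrised by `t ∈ [0, T]`, is the stated first Fourier coefficient.

The mixed partials of a holomorphic function of two variables are exchanged using one-variable
theory only: `∂_z g(b, z₀)` is a Cauchy integral, which may be differentiated in `b` under the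
integral sign, the integrand being dominated through Cauchy's estimate in `b`.
-/

section MixedPartials

theorem exists_closedBall_prod_subset {α β : Type*} [PseudoMetricSpace α] [PseudoMetricSpace β]
    {U : Set (α × β)} (hU : IsOpen U) {p : α × β} (hp : p ∈ U) :
    ∃ ρ > 0, closedBall p.1 ρ ×ˢ closedBall p.2 ρ ⊆ U := by
  obtain ⟨ρ, hρ, hsub⟩ := nhds_basis_closedBall.mem_iff.1 (hU.mem_nhds hp)
  exact ⟨ρ, hρ, (closedBall_prod_same p.1 p.2 ρ).trans_subset hsub⟩

variable {F : Type*} [NormedAddCommGroup F] [NormedSpace ℂ F]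

theorem stronglyMeasurable_of_hasDerivAt_of_continuous {G : ℂ → ℝ → F} {G' : ℝ → F} {b₀ : ℂ}
    {R : ℝ} (hR : 0 < R) (hG : ∀ b ∈ closedBall b₀ R, Continuous (G b))
    (hG' : ∀ t, HasDerivAt (fun b => G b t) (G' t) b₀) :
    MeasureTheory.StronglyMeasurable G' := by
  set h : ℕ → ℂ := fun n => (R : ℂ) * (1 / ((n : ℂ) + 1))
  have hh : Tendsto h atTop (𝓝[≠] 0) := by
    refine tendsto_nhdsWithin_iff.2 ⟨by simpa [h] using
      tendsto_one_div_add_atTop_nhds_zero_nat.const_mul (R : ℂ), Eventually.of_forall fun n => ?_⟩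
    simp [h, hR.ne', Nat.cast_add_one_ne_zero]
  have hh_mem : ∀ n, b₀ + h n ∈ closedBall b₀ R := fun n => by
    have hn : (1 : ℝ) ≤ ‖(n : ℂ) + 1‖ := by
      rw [← Nat.cast_add_one, Complex.norm_natCast]
      exact_mod_cast Nat.le_add_left 1 n
    rw [mem_closedBall, dist_self_add_left]
    simpa [h, abs_of_pos hR] using mul_le_of_le_one_right hR.le (inv_le_one_of_one_le₀ hn)
  refine stronglyMeasurable_of_tendsto atTop
    (f := fun n t => (h n)⁻¹ • (G (b₀ + h n) t - G b₀ t)) (fun n => ?_)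
    (tendsto_pi_nhds.2 fun t => (hG' t).tendsto_slope_zero.comp hh)
  exact (continuous_const.smul ((hG _ (hh_mem n)).sub
    (hG b₀ (mem_closedBall_self hR.le)))).stronglyMeasurable

theorem norm_deriv_le_of_mem_closedBall_half {f : ℂ → F} {b₀ b : ℂ} {R M : ℝ} (hR : 0 < R)
    (hf : DifferentiableOn ℂ f (closedBall b₀ R)) (hM : ∀ z ∈ closedBall b₀ R, ‖f z‖ ≤ M)
    (hb : b ∈ closedBall b₀ (R / 2)) :
    ‖deriv f b‖ ≤ M / (R / 2) := by
  have hdisc : closedBall b (R / 2) ⊆ closedBall b₀ R := fun z hz => by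
    rw [mem_closedBall] at *
    linarith [dist_triangle z b b₀]
  exact Complex.norm_deriv_le_of_forall_mem_sphere_norm_le (half_pos hR)
    ((hf.mono (closure_ball_subset_closedBall.trans hdisc)).diffContOnCl)
    fun z hz => hM z (hdisc (sphere_subset_closedBall hz))

variable {g : ℂ × ℂ → F} {U : Set (ℂ × ℂ)}

theorem hasDerivAt_circleIntegral_of_differentiableOn (hU : IsOpen U)
    (hg : DifferentiableOn ℂ g U) {b₀ c : ℂ} {R σ : ℝ} (hR : 0 < R) (hσ : 0 ≤ σ)
    (hsub : closedBall b₀ R ×ˢ sphere c σ ⊆ U) :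
    HasDerivAt (fun b => ∮ z in C(c, σ), g (b, z))
      (∮ z in C(c, σ), deriv (fun b => g (b, z)) b₀) b₀ := by
  have hmem : ∀ b ∈ closedBall b₀ R, ∀ t, (b, circleMap c σ t) ∈ U := fun b hb t =>
    hsub ⟨hb, circleMap_mem_sphere c hσ t⟩
  have hb₀ : b₀ ∈ closedBall b₀ R := mem_closedBall_self hR.le
  have hpartial : ∀ b ∈ closedBall b₀ R, ∀ t,
      HasDerivAt (fun b => g (b, circleMap c σ t)) (deriv (fun b => g (b, circleMap c σ t)) b) b :=
    fun b hb t => ((hg.differentiableAt (hU.mem_nhds (hmem b hb t))).comp b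
      (differentiableAt_id.prodMk (differentiableAt_const _))).hasDerivAt
  have hspeed : Continuous (deriv (circleMap c σ)) := by
    rw [funext (deriv_circleMap c σ)]
    exact (continuous_circleMap 0 σ).mul continuous_const
  have hintegrand : ∀ b ∈ closedBall b₀ R,
      Continuous fun t => deriv (circleMap c σ) t • g (b, circleMap c σ t) := fun b hb =>
    hspeed.smul (hg.continuousOn.comp_continuous
      (continuous_const.prodMk (continuous_circleMap c σ)) (hmem b hb))
  obtain ⟨M, hM⟩ := ((isCompact_closedBall b₀ R).prod (isCompact_sphere c σ)
    ).exists_bound_of_continuousOn (hg.continuousOn.mono hsub)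
  have hbound : ∀ b ∈ closedBall b₀ (R / 2), ∀ t,
      ‖deriv (fun b => g (b, circleMap c σ t)) b‖ ≤ M / (R / 2) := fun b hb t =>
    norm_deriv_le_of_mem_closedBall_half hR
      (fun z hz => (hpartial z hz t).differentiableAt.differentiableWithinAt)
      (fun z hz => hM _ ⟨hz, circleMap_mem_sphere c hσ t⟩) hb
  refine (intervalIntegral.hasDerivAt_integral_of_dominated_loc_of_deriv_le
    (F' := fun b t => deriv (circleMap c σ) t • deriv (fun b => g (b, circleMap c σ t)) b)
    (bound := fun _ => σ * (M / (R / 2))) (ball_mem_nhds b₀ (half_pos hR))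
    ?_ ((hintegrand b₀ hb₀).intervalIntegrable _ _) ?_ ?_ intervalIntegrable_const ?_).2
  · filter_upwards [closedBall_mem_nhds b₀ hR] with b hb
    exact (hintegrand b hb).aestronglyMeasurable
  · exact (stronglyMeasurable_of_hasDerivAt_of_continuous hR hintegrand
      fun t => (hpartial b₀ hb₀ t).const_smul _).aestronglyMeasurable
  · refine Eventually.of_forall fun t _ b hb => ?_
    rw [norm_smul, deriv_circleMap, norm_mul, norm_circleMap_zero, norm_I, mul_one,
      abs_of_nonneg hσ]
    exact mul_le_mul_of_nonneg_left (hbound b (ball_subset_closedBall hb) t) hσ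
  · exact Eventually.of_forall fun t _ b hb =>
      (hpartial b (closedBall_subset_closedBall (by linarith) (ball_subset_closedBall hb)) t
        ).const_smul _

variable [CompleteSpace F]

theorem hasDerivAt_deriv_slice_eq_circleIntegral (hU : IsOpen U) (hg : DifferentiableOn ℂ g U)
    {b₀ z₀ : ℂ} {ρ : ℝ} (hρ : 0 < ρ) (hsub : closedBall b₀ ρ ×ˢ closedBall z₀ ρ ⊆ U) :
    HasDerivAt (fun b => deriv (fun z => g (b, z)) z₀)
      ((2 * π * I)⁻¹ • ∮ z in C(z₀, ρ), (1 / (z - z₀) ^ 2) • deriv (fun b => g (b, z)) b₀) b₀ := by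
  have hcauchy : ∀ b ∈ closedBall b₀ ρ, deriv (fun z => g (b, z)) z₀ =
      (2 * π * I)⁻¹ • ∮ z in C(z₀, ρ), (1 / (z - z₀) ^ 2) • g (b, z) := by
    intro b hb
    have hslice : DifferentiableOn ℂ (fun z => g (b, z)) (closedBall z₀ ρ) :=
      hg.comp ((differentiable_const b).prodMk differentiable_id).differentiableOn
        fun z hz => hsub ⟨hb, hz⟩
    rw [hslice.deriv_eq_smul_circleIntegral hρ, inv_smul_smul₀ two_pi_I_ne_zero]
  have hkernel : DifferentiableOn ℂ (fun q : ℂ × ℂ => (1 / (q.2 - z₀) ^ 2) • g q)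
      (U ∩ {q | q.2 ≠ z₀}) := by
    refine DifferentiableOn.smul (fun q hq => ?_) (hg.mono inter_subset_left)
    have : (q.2 - z₀) ^ 2 ≠ 0 := pow_ne_zero 2 (sub_ne_zero.2 hq.2)
    have hd : DifferentiableAt ℂ (fun q : ℂ × ℂ => (q.2 - z₀) ^ 2) q :=
      (differentiableAt_snd.sub_const z₀).pow 2
    have hk : DifferentiableAt ℂ (fun q : ℂ × ℂ => 1 / (q.2 - z₀) ^ 2) q := by
      simpa only [one_div] using hd.fun_inv this
    exact hk.differentiableWithinAt
  have h := hasDerivAt_circleIntegral_of_differentiableOn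
    (hU.inter (isOpen_ne_fun continuous_snd continuous_const)) hkernel hρ hρ.le
    fun q hq => ⟨hsub ⟨hq.1, sphere_subset_closedBall hq.2⟩, ne_of_mem_sphere hq.2 hρ.ne'⟩
  have hpull : EqOn (fun z => deriv (fun b => (1 / (z - z₀) ^ 2) • g (b, z)) b₀)
      (fun z => (1 / (z - z₀) ^ 2) • deriv (fun b => g (b, z)) b₀) (sphere z₀ ρ) := fun z hz =>
    deriv_const_smul _ ((hg.differentiableAt (hU.mem_nhds
      (hsub ⟨mem_closedBall_self hρ.le, sphere_subset_closedBall hz⟩))).comp b₀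
      (differentiableAt_id.prodMk (differentiableAt_const z)))
  rw [circleIntegral.integral_congr hρ.le hpull] at h
  refine (h.const_smul (2 * π * I)⁻¹).congr_of_eventuallyEq ?_
  filter_upwards [closedBall_mem_nhds b₀ hρ] with b hb using hcauchy b hb

theorem differentiableAt_deriv_slice_of_differentiableOn (hU : IsOpen U)
    (hg : DifferentiableOn ℂ g U) {p : ℂ × ℂ} (hp : p ∈ U) :
    DifferentiableAt ℂ (fun b => deriv (fun z => g (b, z)) p.2) p.1 := by
  obtain ⟨ρ, hρ, hsub⟩ := exists_closedBall_prod_subset hU hp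
  exact (hasDerivAt_deriv_slice_eq_circleIntegral hU hg hρ hsub).differentiableAt

theorem hasDerivAt_deriv_comm_of_differentiableOn (hU : IsOpen U) (hg : DifferentiableOn ℂ g U)
    {b₀ z₀ : ℂ} (hp : (b₀, z₀) ∈ U) :
    HasDerivAt (fun b => deriv (fun z => g (b, z)) z₀)
      (deriv (fun z => deriv (fun b => g (b, z)) b₀) z₀) b₀ := by
  obtain ⟨ρ, hρ, hsub⟩ := exists_closedBall_prod_subset hU hp
  have hswap : DifferentiableOn ℂ (fun q : ℂ × ℂ => g q.swap) (Prod.swap ⁻¹' U) :=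
    hg.comp (differentiable_snd.prodMk differentiable_fst).differentiableOn fun _ hq => hq
  have hdiff : DifferentiableOn ℂ (fun z => deriv (fun b => g (b, z)) b₀) (closedBall z₀ ρ) :=
    fun z hz => (differentiableAt_deriv_slice_of_differentiableOn (hU.preimage continuous_swap)
      hswap (p := (z, b₀)) (hsub ⟨mem_closedBall_self hρ.le, hz⟩)).differentiableWithinAt
  have h := hasDerivAt_deriv_slice_eq_circleIntegral hU hg hρ hsub
  rwa [hdiff.deriv_eq_smul_circleIntegral hρ, inv_smul_smul₀ two_pi_I_ne_zero] at h

end MixedPartials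

section CauchyFourier

variable {F : Type*} [NormedAddCommGroup F] [NormedSpace ℂ F] [CompleteSpace F]

theorem deriv_eq_smul_integral_exp_mul_I {u : ℂ → F} {r T : ℝ} (hr : 0 < r) (hT : 0 < T)
    (hu : DifferentiableOn ℂ u (closedBall 0 r)) :
    deriv u 0 = (1 / ((T : ℂ) * r)) • ∫ t in (0 : ℝ)..T,
      exp (-((2 * π * t / T : ℝ) * I)) • u (r * exp ((2 * π * t / T : ℝ) * I)) := by
  set f : ℝ → F := fun θ => exp (-(θ * I)) • u (r * exp (θ * I))
  have hr' : (r : ℂ) ≠ 0 := ofReal_ne_zero.2 hr.ne'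
  have hcircle : (∮ z in C(0, r), (1 / (z - 0) ^ 2) • u z) = (I / r) • ∫ θ in 0..2 * π, f θ := by
    rw [← intervalIntegral.integral_smul]
    refine intervalIntegral.integral_congr fun θ _ => ?_
    have hexp : exp (θ * I) ≠ 0 := exp_ne_zero _
    simp only [f, deriv_circleMap, circleMap_zero, sub_zero, smul_smul, exp_neg]
    congr 1
    field_simp
  have hscale : (2 * π / T) ≠ 0 := by positivity
  have hsubst : (∫ t in (0 : ℝ)..T, exp (-((2 * π * t / T : ℝ) * I)) •
      u (r * exp ((2 * π * t / T : ℝ) * I))) = (2 * π / T)⁻¹ • ∫ θ in 0..2 * π, f θ := by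
    have := intervalIntegral.integral_comp_mul_left f hscale (a := 0) (b := T)
    rw [mul_zero, div_mul_cancel₀ _ hT.ne'] at this
    rw [← this]
    refine intervalIntegral.integral_congr fun t _ => ?_
    simp only [f, mul_div_right_comm]
  have hcauchy : deriv u 0 = (2 * π * I)⁻¹ • (I / r) • ∫ θ in 0..2 * π, f θ := by
    rw [← hcircle, hu.deriv_eq_smul_circleIntegral hr, inv_smul_smul₀ two_pi_I_ne_zero]
  rw [hcauchy, hsubst, ← Complex.coe_smul, smul_smul, smul_smul]
  congr 1
  have hT' : (T : ℂ) ≠ 0 := ofReal_ne_zero.2 hT.ne'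
  push_cast
  field_simp

end CauchyFourier

section Envelope

variable {𝕜 P X G : Type*} [NontriviallyNormedField 𝕜] [NormedAddCommGroup P] [NormedSpace 𝕜 P]
  [NormedAddCommGroup X] [NormedSpace 𝕜 X] [NormedAddCommGroup G] [NormedSpace 𝕜 G]

theorem hasDerivAt_comp_of_fderiv_snd_eq_zero {Ψ : P → X → G} {s : P → X} {p : P}
    (hΨ : DifferentiableAt 𝕜 (Function.uncurry Ψ) (p, s p)) (hs : DifferentiableAt 𝕜 s p)
    (hcrit : fderiv 𝕜 (Ψ p) (s p) = 0) {γ : 𝕜 → P} {t : 𝕜} (hγ : DifferentiableAt 𝕜 γ t)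
    (hγt : γ t = p) :
    HasDerivAt (fun τ => Ψ (γ τ) (s (γ τ))) (deriv (fun τ => Ψ (γ τ) (s p)) t) t := by
  subst hγt
  set D := fderiv 𝕜 (Function.uncurry Ψ) (γ t, s (γ t))
  have hD : HasFDerivAt (Function.uncurry Ψ) D (γ t, s (γ t)) := hΨ.hasFDerivAt
  have hfrozen : HasDerivAt (fun τ => Ψ (γ τ) (s (γ t))) (D (deriv γ t, 0)) t :=
    (hD.comp_hasDerivAt t (hγ.hasDerivAt.prodMk (hasDerivAt_const t (s (γ t)))) :)
  have hmoving : HasDerivAt (fun τ => Ψ (γ τ) (s (γ τ)))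
      (D (deriv γ t, fderiv 𝕜 s (γ t) (deriv γ t))) t :=
    (hD.comp_hasDerivAt t
      (hγ.hasDerivAt.prodMk (hs.hasFDerivAt.comp_hasDerivAt t hγ.hasDerivAt)) :)
  have hslice : fderiv 𝕜 (Ψ (γ t)) (s (γ t)) = D.comp (ContinuousLinearMap.inr 𝕜 P X) :=
    (hD.comp (s (γ t)) (hasFDerivAt_prodMk_right (γ t) (s (γ t)))).fderiv
  have hstate : ∀ w, D (0, w) = 0 := fun w => by
    simpa [hslice] using DFunLike.congr_fun hcrit w
  rw [hfrozen.deriv]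
  convert hmoving using 1
  rw [← add_zero (D (deriv γ t, 0)), ← hstate (fderiv 𝕜 s (γ t) (deriv γ t)), ← map_add,
    Prod.mk_add_mk, add_zero, zero_add]

end Envelope

section EquilibriumPropagation

variable {Θ X : Type*} [NormedAddCommGroup Θ] [NormedSpace ℂ Θ] [NormedAddCommGroup X]
  [NormedSpace ℂ X]

/-- The total energy `F(θ, x, β) = E(θ, x) + β ℓ(θ, x)`, written with `p = (θ, β)`. -/
def totalEnergy (E ℓ : Θ × X → ℂ) (p : Θ × ℂ) (x : X) : ℂ := E (p.1, x) + p.2 • ℓ (p.1, x)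

def fixedPointEnergy (E ℓ : Θ × X → ℂ) (s : Θ × ℂ → X) (p : Θ × ℂ) : ℂ :=
  totalEnergy E ℓ p (s p)

noncomputable def energyParamDeriv (E ℓ : Θ × X → ℂ) (s : Θ × ℂ → X) (θ₀ : Θ) (β : ℂ) : Θ →L[ℂ] ℂ :=
  fderiv ℂ (fun θ => totalEnergy E ℓ (θ, β) (s (θ₀, β))) θ₀

variable {E ℓ : Θ × X → ℂ} {W : Set (Θ × ℂ)} {s : Θ × ℂ → X}

theorem differentiable_uncurry_totalEnergy (hE : Differentiable ℂ E) (hℓ : Differentiable ℂ ℓ) :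
    Differentiable ℂ (Function.uncurry (totalEnergy E ℓ)) := by
  unfold totalEnergy Function.uncurry
  fun_prop

theorem differentiableOn_fixedPointEnergy (hE : Differentiable ℂ E) (hℓ : Differentiable ℂ ℓ)
    (hW : IsOpen W) (hs : DifferentiableOn ℂ s W) :
    DifferentiableOn ℂ (fixedPointEnergy E ℓ s) W := fun p hp =>
  ((differentiable_uncurry_totalEnergy hE hℓ _).comp p
    (differentiableAt_id.prodMk (hs.differentiableAt (hW.mem_nhds hp)))).differentiableWithinAt

variable (hE : Differentiable ℂ E) (hℓ : Differentiable ℂ ℓ) (hW : IsOpen W)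
  (hs : DifferentiableOn ℂ s W) (hfix : ∀ p ∈ W, fderiv ℂ (totalEnergy E ℓ p) (s p) = 0)
include hE hℓ hW hs hfix

theorem hasDerivAt_fixedPointEnergy_along_param {θ v : Θ} {b : ℂ} (hp : (θ, b) ∈ W) :
    HasDerivAt (fun z : ℂ => fixedPointEnergy E ℓ s (θ + z • v, b))
      (energyParamDeriv E ℓ s θ b v) 0 := by
  have hdiff : DifferentiableAt ℂ (fun θ' => totalEnergy E ℓ (θ', b) (s (θ, b))) θ :=
    (differentiable_uncurry_totalEnergy hE hℓ _).comp θ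
      (by fun_prop : DifferentiableAt ℂ (fun θ' : Θ => ((θ', b), s (θ, b))) θ)
  rw [energyParamDeriv, ← hdiff.lineDeriv_eq_fderiv]
  exact hasDerivAt_comp_of_fderiv_snd_eq_zero (differentiable_uncurry_totalEnergy hE hℓ _)
    (hs.differentiableAt (hW.mem_nhds hp)) (hfix _ hp) (by fun_prop) (by simp)

theorem hasDerivAt_fixedPointEnergy_along_nudging {θ : Θ} (hp : (θ, 0) ∈ W) :
    HasDerivAt (fun b : ℂ => fixedPointEnergy E ℓ s (θ, b)) (ℓ (θ, s (θ, 0))) 0 := by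
  have h := hasDerivAt_comp_of_fderiv_snd_eq_zero (differentiable_uncurry_totalEnergy hE hℓ _)
    (hs.differentiableAt (hW.mem_nhds hp)) (hfix _ hp) (γ := fun b : ℂ => (θ, b)) (t := 0)
    (by fun_prop) rfl
  have hlin : HasDerivAt (fun b : ℂ => totalEnergy E ℓ (θ, b) (s (θ, 0))) (ℓ (θ, s (θ, 0))) 0 := by
    simpa [totalEnergy] using
      ((hasDerivAt_id (0 : ℂ)).smul_const (ℓ (θ, s (θ, 0)))).const_add (E (θ, s (θ, 0)))
  rwa [hlin.deriv] at h

theorem hasDerivAt_energyParamDeriv_apply {θ₀ v : Θ} {b₀ : ℂ} (hp : (θ₀, b₀) ∈ W) :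
    HasDerivAt (fun b => energyParamDeriv E ℓ s θ₀ b v)
      (deriv (fun z : ℂ => deriv (fun b => fixedPointEnergy E ℓ s (θ₀ + z • v, b)) b₀) 0) b₀ := by
  have hU : IsOpen {q : ℂ × ℂ | (θ₀ + q.2 • v, q.1) ∈ W} := hW.preimage (by fun_prop)
  have hg : DifferentiableOn ℂ (fun q : ℂ × ℂ => fixedPointEnergy E ℓ s (θ₀ + q.2 • v, q.1))
      {q | (θ₀ + q.2 • v, q.1) ∈ W} :=
    (differentiableOn_fixedPointEnergy hE hℓ hW hs).comp (by fun_prop) fun _ hq => hq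
  refine (hasDerivAt_deriv_comm_of_differentiableOn hU hg (b₀ := b₀) (z₀ := 0)
    (by simpa using hp) :).congr_of_eventuallyEq ?_
  filter_upwards [(hW.preimage (by fun_prop : Continuous fun b : ℂ => (θ₀, b))).mem_nhds hp]
    with b hb
  exact (hasDerivAt_fixedPointEnergy_along_param hE hℓ hW hs hfix hb).deriv.symm

theorem hasDerivAt_energyParamDeriv_apply_zero {θ₀ v : Θ} (hp : (θ₀, 0) ∈ W) :
    HasDerivAt (fun b => energyParamDeriv E ℓ s θ₀ b v)
      (fderiv ℂ (fun θ => ℓ (θ, s (θ, 0))) θ₀ v) 0 := by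
  have hL : DifferentiableAt ℂ (fun θ => ℓ (θ, s (θ, 0))) θ₀ :=
    (hℓ _).comp θ₀ (differentiableAt_id.prodMk ((hs.differentiableAt (hW.mem_nhds hp)).comp θ₀
      (differentiableAt_id.prodMk (differentiableAt_const 0))))
  convert hasDerivAt_energyParamDeriv_apply hE hℓ hW hs hfix (v := v) hp using 1
  rw [← hL.lineDeriv_eq_fderiv]
  refine Filter.EventuallyEq.deriv_eq ?_
  filter_upwards [(hW.preimage (by fun_prop : Continuous fun z : ℂ => (θ₀ + z • v, (0 : ℂ)))
    ).mem_nhds (by simpa using hp)] with z hz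
  exact (hasDerivAt_fixedPointEnergy_along_nudging hE hℓ hW hs hfix hz).deriv.symm

end EquilibriumPropagation

/-- Theorem 1 (exact gradient from finite teaching signals): the exact loss gradient
equals the first exponential Fourier coefficient, over one period `T`, of the
θ-partial derivative of the total energy evaluated along the adiabatic fixed points
traced as the complex nudging parameter moves on the circle of radius `r`. -/
theorem exact_gradient_from_finite_teaching_signals
    {m n : ℕ}
    (E ℓ : (Fin m → ℂ) × (Fin n → ℂ) → ℂ)
    (hE : Differentiable ℂ E) (hℓ : Differentiable ℂ ℓ)
    (W : Set ((Fin m → ℂ) × ℂ)) (hW : IsOpen W)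
    (s : (Fin m → ℂ) × ℂ → (Fin n → ℂ))
    (hs : DifferentiableOn ℂ s W)
    (hfix : ∀ p ∈ W,
      fderiv ℂ (fun x => E (p.1, x) + p.2 • ℓ (p.1, x)) (s p) = 0)
    (L : (Fin m → ℂ) → ℂ) (hL : L = fun θ => ℓ (θ, s (θ, 0)))
    (θ₀ : Fin m → ℂ) (r T : ℝ) (hr : 0 < r) (hT : 0 < T)
    (hball : {θ₀} ×ˢ {β : ℂ | ‖β‖ ≤ r} ⊆ W)
    (β : ℝ → ℂ) (hβ : β = fun t => (r : ℂ) * Complex.exp ((2 * π * t / T : ℝ) * Complex.I)) :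
    fderiv ℂ L θ₀
      = (1 / ((T : ℂ) * (r : ℂ))) •
        ∫ t in ((0 : ℝ))..T,
          Complex.exp (-((2 * π * t / T : ℝ) * Complex.I)) •
            fderiv ℂ (fun θ' => E (θ', s (θ₀, β t)) + (β t) • ℓ (θ', s (θ₀, β t))) θ₀ := by
  subst hL
  have hdisk : ∀ b ∈ closedBall (0 : ℂ) r, (θ₀, b) ∈ W := fun b hb =>
    hball ⟨rfl, by simpa using hb⟩
  have hu : ∀ v, DifferentiableOn ℂ (fun b => energyParamDeriv E ℓ s θ₀ b v) (closedBall 0 r) :=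
    fun v b hb => (hasDerivAt_energyParamDeriv_apply hE hℓ hW hs hfix (hdisk b hb)
      ).differentiableAt.differentiableWithinAt
  have hβ_mem : ∀ t, β t ∈ closedBall (0 : ℂ) r := fun t => by
    rw [hβ, mem_closedBall, dist_zero_right, norm_mul, norm_exp_ofReal_mul_I, mul_one, norm_real,
      Real.norm_of_nonneg hr.le]
  have hcont : Continuous fun t => energyParamDeriv E ℓ s θ₀ (β t) :=
    continuous_clm_apply.2 fun v =>
      (hu v).continuousOn.comp_continuous (hβ ▸ by fun_prop) hβ_mem
  show _ = _ • ∫ t in (0 : ℝ)..T, exp (-((2 * π * t / T : ℝ) * I)) • energyParamDeriv E ℓ s θ₀ (β t)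
  ext v
  rw [smul_apply, ContinuousLinearMap.intervalIntegral_apply
      (((by fun_prop : Continuous fun t : ℝ => exp (-((2 * π * t / T : ℝ) * I))).fun_smul hcont
        ).intervalIntegrable 0 T),
    ← (hasDerivAt_energyParamDeriv_apply_zero hE hℓ hW hs hfix (hdisk 0 (by simp [hr.le]))).deriv,
    deriv_eq_smul_integral_exp_mul_I hr hT (hu v), hβ]
  rfl
end

section
/- Let r > 0, let f : ℂ → ℂ be complex-differentiable on an open set U ⊆ ℂ containing the closed disk {z : ℂ | ‖z‖ ≤ r}, and let N ≥ 2 be a natural number. Define β_k = r·exp(2πi k / N) for k = 0, …, N−1 and the estimator ∇̂(N) = (1/(N·r)) · Σ_{k=0}^{N−1} f(β_k)·exp(−2πi k / N). Then ∇̂(N) − deriv f 0 = Σ_{q=1}^{∞} (iteratedDeriv (N·q + 1) f 0) · r^{N·q} / (N·q + 1)!, where the series on the right converges. -/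
open scoped Real

/-!
Expand `f` in its Taylor series `∑ aₚ zᵖ` at `0`; it converges on a disk slightly larger than the
closed disk of radius `r`. With `ζ` a primitive `N`-th root of unity, `∑ₖ ζ^{k(p-1)}` is `N` when
`p ≡ 1 (mod N)` and `0` otherwise, so `(1/(N r)) ∑ₖ f(r ζᵏ) ζ⁻ᵏ = ∑_q a_{Nq+1} r^{Nq}`. Since
`N ≥ 2`, the term `q = 0` is `a₁ = f'(0)` and the remaining terms are the bias.
-/

open Finset Metric

lemma exists_gt_ball_subset_of_closedBall_subset {E : Type*} [NormedAddCommGroup E]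
    [NormedSpace ℝ E] [ProperSpace E] {x : E} {r : ℝ} {U : Set E} (hU : IsOpen U) (hr : 0 ≤ r)
    (h : closedBall x r ⊆ U) : ∃ R > r, ball x R ⊆ U := by
  obtain ⟨δ, hδ, hδU⟩ := (isCompact_closedBall x r).exists_thickening_subset_open hU h
  refine ⟨δ + r, by linarith, ?_⟩
  rwa [thickening_closedBall hδ hr] at hδU

lemma hasSum_taylorSeries_of_closedBall_subset {f : ℂ → ℂ} {U : Set ℂ} {r : ℝ} (hU : IsOpen U)
    (hdisk : closedBall 0 r ⊆ U) (hf : DifferentiableOn ℂ f U) {z : ℂ} (hz : ‖z‖ ≤ r) :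
    HasSum (fun p => iteratedDeriv p f 0 / p.factorial * z ^ p) (f z) := by
  obtain ⟨R, hrR, hR⟩ :=
    exists_gt_ball_subset_of_closedBall_subset hU ((norm_nonneg z).trans hz) hdisk
  refine (Complex.hasSum_taylorSeries_on_ball (hf.mono hR)
    (mem_ball_zero_iff.mpr (hz.trans_lt hrR))).congr_fun fun p => ?_
  rw [sub_zero, smul_eq_mul, smul_eq_mul]
  ring

lemma Nat.exists_eq_mul_add_iff_dvd_sub {N j p : ℕ} (hj : j < N) :
    (∃ q, N * q + j = p) ↔ (N : ℤ) ∣ (p : ℤ) - j := by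
  rw [← Nat.modEq_iff_dvd, Nat.ModEq, Nat.mod_eq_of_lt hj]
  constructor
  · rintro ⟨q, rfl⟩
    simp [Nat.mod_eq_of_lt hj]
  · intro h
    exact ⟨p / N, by have := Nat.div_add_mod p N; omega⟩

section RootsOfUnity

variable {K : Type*} [Field K]

lemma pow_pow_mul_inv_pow_pow {ζ : K} (hζ : ζ ≠ 0) (p j k : ℕ) :
    (ζ ^ k) ^ p * (ζ ^ k)⁻¹ ^ j = (ζ ^ ((p : ℤ) - j)) ^ k := by
  rw [← zpow_natCast (ζ ^ ((p : ℤ) - j)) k, ← zpow_mul, sub_mul, zpow_sub₀ hζ]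
  norm_cast
  rw [← pow_mul, inv_pow, ← pow_mul, div_eq_mul_inv, mul_comm k p, mul_comm k j]

theorem IsPrimitiveRoot.sum_range_pow_zpow {ζ : K} {N : ℕ} (hζ : IsPrimitiveRoot ζ N) (m : ℤ) :
    ∑ k ∈ range N, (ζ ^ m) ^ k = if (N : ℤ) ∣ m then (N : K) else 0 := by
  split_ifs with hm
  · simp [(hζ.zpow_eq_one_iff_dvd m).mpr hm]
  · have hne : ζ ^ m ≠ 1 := mt (hζ.zpow_eq_one_iff_dvd m).mp hm
    rw [geom_sum_eq hne, ← zpow_natCast, ← zpow_mul, mul_comm, zpow_mul, zpow_natCast,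
      hζ.pow_eq_one, one_zpow, sub_self, zero_div]

theorem IsPrimitiveRoot.hasSum_aliasing [TopologicalSpace K] [IsTopologicalSemiring K]
    {ζ : K} {N : ℕ} (hζ : IsPrimitiveRoot ζ N) {a : ℕ → K} {g : K → K} {z : K}
    (hg : ∀ k < N, HasSum (fun p => a p * (z * ζ ^ k) ^ p) (g (z * ζ ^ k)))
    {j : ℕ} (hj : j < N) :
    HasSum (fun q => N * (a (N * q + j) * z ^ (N * q + j)))
      (∑ k ∈ range N, g (z * ζ ^ k) * (ζ ^ k)⁻¹ ^ j) := by
  have hζ0 : ζ ≠ 0 := hζ.ne_zero (by omega)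
  have hfilter : ∀ p, ∑ k ∈ range N, a p * (z * ζ ^ k) ^ p * (ζ ^ k)⁻¹ ^ j
      = a p * z ^ p * if (N : ℤ) ∣ (p : ℤ) - j then (N : K) else 0 := by
    intro p
    simp_rw [← hζ.sum_range_pow_zpow, mul_sum, ← pow_pow_mul_inv_pow_pow hζ0, mul_pow]
    exact sum_congr rfl fun k _ => by ring
  have hsum := hasSum_sum fun k hk => (hg k (mem_range.mp hk)).mul_right ((ζ ^ k)⁻¹ ^ j)
  simp only [hfilter] at hsum
  have hinj : Function.Injective (fun q => N * q + j) :=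
    (add_left_injective j).comp (mul_right_injective₀ (by omega : N ≠ 0))
  rw [← hinj.hasSum_iff fun p hp => by
    rw [if_neg (mt (Nat.exists_eq_mul_add_iff_dvd_sub hj).mpr hp), mul_zero]] at hsum
  refine hsum.congr_fun fun q => ?_
  rw [Function.comp_apply, if_pos ((Nat.exists_eq_mul_add_iff_dvd_sub hj).mp ⟨q, rfl⟩), mul_comm]

end RootsOfUnity

lemma Complex.exp_two_pi_mul_div_mul_I_eq_pow (k N : ℕ) :
    Complex.exp ((2 * π * k / N : ℝ) * Complex.I) = Complex.exp (2 * π * Complex.I / N) ^ k := by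
  rw [← Complex.exp_nat_mul]
  push_cast
  ring_nf

/-- Exact bias formula (Eq. (9)) for the `N`-point Riemann-sum estimator of the
holomorphic-EP gradient: the bias is the sub-sum of the Taylor remainder over the
orders `p = N·q`, `q ≥ 1`. -/
theorem bias_of_N_point_estimator
    (r : ℝ) (hr : 0 < r)
    (f : ℂ → ℂ) (U : Set ℂ) (hU : IsOpen U)
    (hdisk : {z : ℂ | ‖z‖ ≤ r} ⊆ U)
    (hf : DifferentiableOn ℂ f U)
    (N : ℕ) (hN : 2 ≤ N) :
    HasSum
      (fun q : ℕ =>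
        iteratedDeriv (N * (q + 1) + 1) f 0 * (r : ℂ) ^ (N * (q + 1)) /
          (Nat.factorial (N * (q + 1) + 1) : ℂ))
      ((1 / ((N : ℂ) * (r : ℂ))) *
          (∑ k ∈ Finset.range N,
            f ((r : ℂ) * Complex.exp ((2 * π * k / N : ℝ) * Complex.I)) *
              Complex.exp (-((2 * π * k / N : ℝ) * Complex.I)))
        - deriv f 0) := by
  set ζ := Complex.exp (2 * π * Complex.I / N)
  have hζ : IsPrimitiveRoot ζ N := Complex.isPrimitiveRoot_exp N (by omega)
  have htaylor : ∀ k < N, HasSum (fun p => iteratedDeriv p f 0 / p.factorial * (r * ζ ^ k) ^ p)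
      (f (r * ζ ^ k)) := fun k _ =>
    hasSum_taylorSeries_of_closedBall_subset hU (fun z hz => hdisk (mem_closedBall_zero_iff.mp hz))
      hf (by simp [hζ.norm'_eq_one (by omega), abs_of_pos hr])
  have halias := (hζ.hasSum_aliasing htaylor (j := 1) (by omega)).mul_left ((1 : ℂ) / (N * r))
  rw [← hasSum_nat_add_iff' 1] at halias
  simp only [sum_range_one, pow_one, mul_zero, zero_add, Nat.factorial_one, Nat.cast_one, div_one,
    iteratedDeriv_one] at halias
  have hN0 : (N : ℂ) ≠ 0 := by exact_mod_cast (by omega : N ≠ 0)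
  have hr0 : (r : ℂ) ≠ 0 := by exact_mod_cast hr.ne'
  rw [show 1 / (N * r) * (N * (deriv f 0 * r)) = deriv f 0 by field_simp] at halias
  simp_rw [Complex.exp_neg, Complex.exp_two_pi_mul_div_mul_I_eq_pow]
  exact halias.congr_fun fun q => by field_simp; ring
end

section
/- Let r > 0, let f : ℂ → ℂ be complex-differentiable on an open set U ⊆ ℂ containing the closed disk {z : ℂ | ‖z‖ ≤ r}, and let N ≥ 2 be a natural number. Define ∇̂(N) = (1/(N·r)) · Σ_{k=0}^{N−1} f(r·exp(2πi k / N))·exp(−2πi k / N). Then ‖∇̂(N) − deriv f 0‖ ≤ Σ_{p=N}^{∞} ‖iteratedDeriv (p + 1) f 0‖ · r^p / (p + 1)!. -/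
/-!
Expand `f` in its Taylor series `∑ aₙ zⁿ` on a disk of radius `R > r`. Since
`∑_{k<N} ζ^{k(n-1)}` is `N` or `0` according as `N ∣ n - 1`, the `N`-point estimator equals
`∑_{m ≥ 0} a_{mN+1} r^{mN}`, whose `m = 0` term is `f'(0)`. The bias is thus a sub-sum of
`∑_{p ≥ N} a_{p+1} r^p`, bounded by the sum of the absolute values, which converges because
`r < R`.
-/

open scoped Real Nat
open Finset Metric

theorem exists_lt_ball_subset_of_closedBall_subset {E : Type*} [NormedAddCommGroup E]
    [NormedSpace ℝ E] [ProperSpace E] {x : E} {r : ℝ} {U : Set E} (hU : IsOpen U) (hr : 0 ≤ r)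
    (h : closedBall x r ⊆ U) : ∃ R, r < R ∧ ball x R ⊆ U := by
  obtain ⟨δ, hδ, hδU⟩ := (isCompact_closedBall x r).exists_thickening_subset_open hU h
  rw [thickening_closedBall hδ hr] at hδU
  exact ⟨r + δ, by linarith, by rwa [add_comm]⟩

theorem summable_norm_mul_pow_of_summable_mul_pow {𝕜 : Type*} [NormedDivisionRing 𝕜]
    {a : ℕ → 𝕜} {w : 𝕜} (ha : Summable fun n => a n * w ^ n) {r : ℝ} (hr : 0 ≤ r)
    (hrw : r < ‖w‖) : Summable fun n => ‖a n‖ * r ^ n := by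
  have hw : 0 < ‖w‖ := hr.trans_lt hrw
  obtain ⟨C, hC⟩ := ha.tendsto_atTop_zero.norm.bddAbove_range
  refine ((summable_geometric_of_lt_one (div_nonneg hr hw.le) ((div_lt_one hw).2 hrw)).mul_left C
    ).of_nonneg_of_le (fun n => by positivity) fun n => ?_
  calc ‖a n‖ * r ^ n = ‖a n * w ^ n‖ * (r / ‖w‖) ^ n := by
        rw [norm_mul, norm_pow, div_pow]; field_simp
    _ ≤ C * (r / ‖w‖) ^ n := by gcongr; exact hC (Set.mem_range_self n)

theorem norm_le_tsum_norm_of_hasSum_comp {ι κ E : Type*} [NormedAddCommGroup E]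
    {c : κ → E} {i : ι → κ} {s : E} (hi : Function.Injective i) (hs : HasSum (c ∘ i) s)
    (hc : Summable fun k => ‖c k‖) : ‖s‖ ≤ ∑' k, ‖c k‖ :=
  hs.tsum_eq ▸ (norm_tsum_le_tsum_norm (hc.comp_injective hi)).trans
    (tsum_comp_le_tsum_of_inj hc (fun _ => norm_nonneg _) hi)

theorem IsPrimitiveRoot.sum_zpow_pow {K : Type*} [Field K] {ζ : K} {N : ℕ}
    (hζ : IsPrimitiveRoot ζ N) (j : ℤ) :
    ∑ k ∈ range N, (ζ ^ j) ^ k = if (N : ℤ) ∣ j then (N : K) else 0 := by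
  split_ifs with hj
  · simp [(hζ.zpow_eq_one_iff_dvd j).2 hj]
  · have hroot : (ζ ^ j) ^ N = 1 := by
      rw [← zpow_natCast, ← zpow_mul, mul_comm, zpow_mul, zpow_natCast, hζ.pow_eq_one, one_zpow]
    rw [geom_sum_eq (mt (hζ.zpow_eq_one_iff_dvd j).1 hj), hroot, sub_self, zero_div]

theorem exists_mul_add_one_eq_of_dvd_sub_one {N n : ℕ} (hN : 2 ≤ N) (h : (N : ℤ) ∣ n - 1) :
    ∃ m, m * N + 1 = n := by
  obtain ⟨c, hc⟩ := h
  lift c to ℕ using by nlinarith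
  exact ⟨c, by linarith⟩

/-- Roots-of-unity filter: twisting the `N` rotated copies of a power series by `ζ ^ (-k)` and
summing kills every coefficient except those of index `≡ 1 [MOD N]`. -/
theorem IsPrimitiveRoot.hasSum_sum_mul_inv_pow {K : Type*} [Field K] [TopologicalSpace K]
    [IsTopologicalRing K] {ζ : K} {N : ℕ} (hζ : IsPrimitiveRoot ζ N) (hN : 2 ≤ N)
    {a : ℕ → K} {b : ℕ → K} {w : K}
    (hb : ∀ k ∈ range N, HasSum (fun n => a n * (w * ζ ^ k) ^ n) (b k)) :
    HasSum (fun m => N * (a (m * N + 1) * w ^ (m * N + 1))) (∑ k ∈ range N, b k * (ζ ^ k)⁻¹) := by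
  have hζ0 : ζ ≠ 0 := hζ.ne_zero (by omega)
  have hterm (n : ℕ) : ∑ k ∈ range N, a n * (w * ζ ^ k) ^ n * (ζ ^ k)⁻¹
      = a n * w ^ n * if (N : ℤ) ∣ (n : ℤ) - 1 then (N : K) else 0 := by
    rw [← hζ.sum_zpow_pow, mul_sum]
    refine sum_congr rfl fun k _ => ?_
    have hpow : (ζ ^ k) ^ n * (ζ ^ k)⁻¹ = (ζ ^ ((n : ℤ) - 1)) ^ k := by
      rw [← zpow_natCast, ← zpow_neg_one, ← zpow_add₀ (pow_ne_zero k hζ0), ← zpow_natCast,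
        ← zpow_natCast (ζ ^ _), ← zpow_mul, ← zpow_mul, mul_comm, ← sub_eq_add_neg]
    rw [mul_pow, ← hpow]
    ring
  have hsum := hasSum_sum fun k hk => (hb k hk).mul_right (ζ ^ k)⁻¹
  simp only [hterm] at hsum
  have hinj : Function.Injective fun m => m * N + 1 := fun m m' h => by
    simpa [Nat.mul_left_inj (by omega : N ≠ 0)] using h
  rw [← hinj.hasSum_iff] at hsum
  · refine hsum.congr_fun fun m => ?_
    rw [Function.comp_apply, if_pos ⟨m, by push_cast; ring⟩, mul_comm]
  · intro n hn
    rw [if_neg, mul_zero]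
    exact fun h => hn (exists_mul_add_one_eq_of_dvd_sub_one hN h)

noncomputable def nPointEstimator (f : ℂ → ℂ) (r : ℝ) (N : ℕ) : ℂ :=
  (1 / ((N : ℂ) * (r : ℂ))) *
    ∑ k ∈ range N, f ((r : ℂ) * Complex.exp ((2 * π * k / N : ℝ) * Complex.I)) *
      Complex.exp (-((2 * π * k / N : ℝ) * Complex.I))

theorem hasSum_nPointEstimator {f : ℂ → ℂ} {a : ℕ → ℂ} {r : ℝ} (hr : 0 < r) {N : ℕ}
    (hN : 2 ≤ N) (ha : ∀ z : ℂ, ‖z‖ = r → HasSum (fun n => a n * z ^ n) (f z)) :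
    HasSum (fun m => a (m * N + 1) * (r : ℂ) ^ (m * N)) (nPointEstimator f r N) := by
  have hN0 : N ≠ 0 := by omega
  set ζ := Complex.exp (2 * π * Complex.I / N)
  have hζ : IsPrimitiveRoot ζ N := Complex.isPrimitiveRoot_exp N hN0
  have hexp (k : ℕ) : Complex.exp ((2 * π * k / N : ℝ) * Complex.I) = ζ ^ k := by
    rw [← Complex.exp_nat_mul]
    congr 1
    push_cast
    ring
  have hnorm (k : ℕ) : ‖(r : ℂ) * ζ ^ k‖ = r := by
    rw [norm_mul, norm_pow, hζ.norm'_eq_one hN0, one_pow, mul_one, Complex.norm_real,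
      Real.norm_of_nonneg hr.le]
  have hfilter := (hζ.hasSum_sum_mul_inv_pow hN fun k _ => ha _ (hnorm k)).mul_left
    (1 / ((N : ℂ) * r))
  simp only [nPointEstimator, Complex.exp_neg, hexp]
  refine hfilter.congr_fun fun m => ?_
  have hr0 : (r : ℂ) ≠ 0 := by exact_mod_cast hr.ne'
  field_simp
  ring

/-- Quantitative bound on the bias of the `N`-point estimator: its norm is bounded by
the tail, from order `N` on, of the absolute Taylor series of `f` at `0` evaluated at
radius `r`. -/
theorem bias_of_N_point_estimator_norm_le
    (r : ℝ) (hr : 0 < r)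
    (f : ℂ → ℂ) (U : Set ℂ) (hU : IsOpen U)
    (hdisk : {z : ℂ | ‖z‖ ≤ r} ⊆ U)
    (hf : DifferentiableOn ℂ f U)
    (N : ℕ) (hN : 2 ≤ N) :
    ‖(1 / ((N : ℂ) * (r : ℂ))) *
        (∑ k ∈ Finset.range N,
          f ((r : ℂ) * Complex.exp ((2 * π * k / N : ℝ) * Complex.I)) *
            Complex.exp (-((2 * π * k / N : ℝ) * Complex.I)))
      - deriv f 0‖
      ≤ ∑' p : ℕ,
          ‖iteratedDeriv (N + p + 1) f 0‖ * r ^ (N + p) /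
            (Nat.factorial (N + p + 1) : ℝ) := by
  obtain ⟨R, hrR, hball⟩ := exists_lt_ball_subset_of_closedBall_subset hU hr.le
    fun z hz => hdisk (mem_closedBall_zero_iff.1 hz)
  set a : ℕ → ℂ := fun n => (n ! : ℂ)⁻¹ * iteratedDeriv n f 0
  have htaylor (z : ℂ) (hz : ‖z‖ < R) : HasSum (fun n => a n * z ^ n) (f z) := by
    simpa [a, smul_eq_mul, mul_comm, mul_left_comm] using
      Complex.hasSum_taylorSeries_on_ball (hf.mono hball) (mem_ball_zero_iff.2 hz)
  have habs : Summable fun n => ‖a n‖ * r ^ n := by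
    obtain ⟨r', hrr', hr'R⟩ := exists_between hrR
    refine summable_norm_mul_pow_of_summable_mul_pow (htaylor r' ?_).summable hr.le ?_ <;>
      rwa [Complex.norm_real, Real.norm_of_nonneg (hr.trans hrr').le]
  have hbias := (hasSum_nat_add_iff' 1).2 <|
    hasSum_nPointEstimator hr hN fun z hz => htaylor z (hz ▸ hrR)
  change ‖nPointEstimator f r N - deriv f 0‖ ≤ _
  refine (norm_le_tsum_norm_of_hasSum_comp (c := fun p => a (N + p + 1) * (r : ℂ) ^ (N + p))
    (i := fun m => m * N) (mul_left_injective₀ (by omega : N ≠ 0)) ?_ ?_).trans_eq ?_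
  · convert hbias using 1
    · funext m
      simp only [Function.comp_apply, ← Nat.succ_mul, add_comm N]
    · simp [a]
  · refine (((summable_nat_add_iff (N + 1)).2 habs).mul_left r⁻¹).congr fun p => ?_
    rw [show p + (N + 1) = N + p + 1 by ring, norm_mul (a _), norm_pow, Complex.norm_real,
      Real.norm_of_nonneg hr.le, pow_succ]
    field_simp
  · refine tsum_congr fun p => ?_
    simp only [a, norm_mul, norm_inv, norm_pow, Complex.norm_natCast, Complex.norm_real,
      Real.norm_of_nonneg hr.le]
    ring
end

section
/- Let r > 0 and T > 0, and let f : ℂ → ℂ be complex-differentiable on an open set U ⊆ ℂ containing the closed disk {z : ℂ | ‖z‖ ≤ r}. Assume f is real on the real axis: f(x) ∈ ℝ (i.e. has zero imaginary part) for every real x with |x| ≤ r. Then deriv f 0 = (2/(r·T)) · ∫_{t=0}^{T} Re(f(r·exp(2πi t / T))) · cos(2π t / T) dt, where the right-hand side is a real number regarded as a complex number. -/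
open scoped Real

/-!
Write `g(θ) = f(r e^{iθ})`. By Cauchy's formula for the derivative,
`∫₀^{2π} e^{-iθ} g(θ) dθ = 2π r f'(0)`, and by Cauchy–Goursat applied to `∮ f dz`,
`∫₀^{2π} e^{iθ} g(θ) dθ = 0`; adding the two, `∫₀^{2π} g(θ) cos θ dθ = π r f'(0)`.
Taking real parts only needs `Re f'(0)`, and `f'(0)` is real because it is also the derivative
of the restriction of `f` to the real axis, where `f` is real. The substitution `θ = 2πt/T`
turns the integral over one period of the teaching path into this one.
-/

open Complex Metric

section CircleFourier

variable {f : ℂ → ℂ} {c : ℂ} {r : ℝ}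

theorem ContinuousOn.comp_continuous_circleMap (hr : 0 ≤ r)
    (hf : ContinuousOn f (closedBall c r)) : Continuous fun θ => f (circleMap c r θ) :=
  hf.comp_continuous (continuous_circleMap c r) (circleMap_mem_closedBall c hr)

theorem DiffContOnCl.integral_exp_neg_mul_circleMap (hr : 0 < r)
    (hf : DiffContOnCl ℂ f (ball c r)) :
    ∫ θ in (0 : ℝ)..2 * π, exp (-(θ * I)) * f (circleMap c r θ) = 2 * π * r * deriv f c := by
  have hr' : (r : ℂ) ≠ 0 := ofReal_ne_zero.mpr hr.ne'
  have hcircle : (∮ z in C(c, r), (1 / (z - c) ^ 2) • f z) =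
      I / r * ∫ θ in (0 : ℝ)..2 * π, exp (-(θ * I)) * f (circleMap c r θ) := by
    rw [circleIntegral, ← intervalIntegral.integral_const_mul]
    refine intervalIntegral.integral_congr fun θ _ => ?_
    simp only [deriv_circleMap, circleMap_sub_center, circleMap_zero, smul_eq_mul, exp_neg]
    field_simp
  have hcauchy := hf.deriv_eq_smul_circleIntegral hr
  rw [hcircle, smul_eq_mul] at hcauchy
  field_simp at hcauchy ⊢
  linear_combination hcauchy

theorem DiffContOnCl.integral_exp_mul_circleMap (hr : 0 < r)
    (hf : DiffContOnCl ℂ f (ball c r)) :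
    ∫ θ in (0 : ℝ)..2 * π, exp (θ * I) * f (circleMap c r θ) = 0 := by
  have hcircle : (∮ z in C(c, r), f z) =
      r * I * ∫ θ in (0 : ℝ)..2 * π, exp (θ * I) * f (circleMap c r θ) := by
    rw [circleIntegral, ← intervalIntegral.integral_const_mul]
    refine intervalIntegral.integral_congr fun θ _ => ?_
    simp only [deriv_circleMap, circleMap_zero, smul_eq_mul]
    ring
  have hgoursat := hf.circleIntegral_eq_zero hr.le
  rw [hcircle] at hgoursat
  exact (mul_eq_zero.mp hgoursat).resolve_left
    (mul_ne_zero (ofReal_ne_zero.mpr hr.ne') I_ne_zero)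

theorem DiffContOnCl.integral_circleMap_mul_cos (hr : 0 < r)
    (hf : DiffContOnCl ℂ f (ball c r)) :
    ∫ θ in (0 : ℝ)..2 * π, f (circleMap c r θ) * cos θ = π * r * deriv f c := by
  have hcont := hf.continuousOn_ball.comp_continuous_circleMap hr.le
  have hint (s : ℂ) : IntervalIntegrable (fun θ : ℝ => exp (s * θ * I) * f (circleMap c r θ))
      MeasureTheory.volume 0 (2 * π) :=
    (by fun_prop : Continuous fun θ : ℝ => exp (s * θ * I)).mul hcont |>.intervalIntegrable _ _
  have hcos : ∫ θ in (0 : ℝ)..2 * π, f (circleMap c r θ) * cos θ =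
      ((∫ θ in (0 : ℝ)..2 * π, exp (-(θ * I)) * f (circleMap c r θ)) +
        ∫ θ in (0 : ℝ)..2 * π, exp (θ * I) * f (circleMap c r θ)) / 2 := by
    rw [← intervalIntegral.integral_add (by simpa using hint (-1)) (by simpa using hint 1),
      ← intervalIntegral.integral_div]
    refine intervalIntegral.integral_congr fun θ _ => ?_
    simp only [cos, neg_mul]
    ring
  rw [hcos, hf.integral_exp_neg_mul_circleMap hr, hf.integral_exp_mul_circleMap hr]
  ring

theorem DiffContOnCl.integral_re_circleMap_mul_cos (hr : 0 < r)
    (hf : DiffContOnCl ℂ f (ball c r)) :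
    ∫ θ in (0 : ℝ)..2 * π, (f (circleMap c r θ)).re * Real.cos θ = π * r * (deriv f c).re := by
  have hcont : Continuous fun θ : ℝ => f (circleMap c r θ) * cos θ :=
    (hf.continuousOn_ball.comp_continuous_circleMap hr.le).mul (by fun_prop)
  have hre := congrArg re (hf.integral_circleMap_mul_cos hr)
  rw [← RCLike.re_to_complex,
    ← intervalIntegral.intervalIntegral_re (hcont.intervalIntegrable _ _)] at hre
  simpa [← ofReal_cos] using hre

theorem Complex.im_deriv_eq_zero_of_eventually_im_eq_zero {x : ℝ} (hf : DifferentiableAt ℂ f x)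
    (hreal : ∀ᶠ y : ℝ in nhds x, (f y).im = 0) : (deriv f x).im = 0 := by
  have hline : HasDerivAt (fun y : ℝ => (f y).im) (deriv f x).im x :=
    imCLM.hasFDerivAt.comp_hasDerivAt x hf.hasDerivAt.comp_ofReal
  exact hline.unique ((hasDerivAt_const x (0 : ℝ)).congr_of_eventuallyEq hreal)

end CircleFourier

theorem intervalIntegral.integral_comp_two_pi_mul_div {E : Type*} [NormedAddCommGroup E]
    [NormedSpace ℝ E] (g : ℝ → E) {T : ℝ} (hT : T ≠ 0) :
    ∫ t in (0 : ℝ)..T, g (2 * π * t / T) = (T / (2 * π)) • ∫ θ in (0 : ℝ)..2 * π, g θ := by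
  have hcomp := intervalIntegral.integral_comp_div g (a := 0) (b := T)
    (div_ne_zero hT (by positivity) : T / (2 * π) ≠ 0)
  rw [zero_div, div_div_cancel₀ hT] at hcomp
  simpa only [div_div_eq_mul_div, mul_comm] using hcomp

theorem deriv_from_real_part_cosine_general
    (r T : ℝ) (hr : 0 < r) (hT : 0 < T)
    (f : ℂ → ℂ) (U : Set ℂ)
    (hdisk : {z : ℂ | ‖z‖ ≤ r} ⊆ U)
    (hf : DifferentiableOn ℂ f U)
    (hreal : ∀ x : ℝ, |x| ≤ r → (f (x : ℂ)).im = 0) :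
    deriv f 0
      = (((2 / (r * T)) *
          ∫ t in (0 : ℝ)..T,
            (f ((r : ℂ) * Complex.exp ((2 * π * t / T : ℝ) * Complex.I))).re *
              Real.cos (2 * π * t / T) : ℝ) : ℂ) := by
  have hball : DiffContOnCl ℂ f (ball 0 r) := by
    refine (hf.mono fun z hz => hdisk ?_).diffContOnCl
    simpa [closure_ball (0 : ℂ) hr.ne'] using hz
  have hderiv_real : (deriv f 0).im = 0 := by
    refine im_deriv_eq_zero_of_eventually_im_eq_zero (x := 0) ?_ ?_
    · simpa using hball.differentiableAt isOpen_ball (mem_ball_self hr)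
    · filter_upwards [Icc_mem_nhds (neg_lt_zero.mpr hr) hr] with x hx
      exact hreal x (abs_le.mpr hx)
  simp only [← circleMap_zero]
  rw [intervalIntegral.integral_comp_two_pi_mul_div
      (fun θ => (f (circleMap 0 r θ)).re * Real.cos θ) hT.ne',
    hball.integral_re_circleMap_mul_cos hr, smul_eq_mul]
  have hscale : 2 / (r * T) * (T / (2 * π) * (π * r * (deriv f 0).re)) = (deriv f 0).re := by
    field_simp
  rw [hscale]
  exact Complex.ext rfl (by simpa using hderiv_real)

/-- Appendix A.3: when `f` is real on the real axis, the exact gradient can be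
recovered from the real part alone of the complex oscillation along the circular
teaching path, by projecting against the cosine of the teaching frequency. -/
theorem deriv_from_real_part_cosine
    (r T : ℝ) (hr : 0 < r) (hT : 0 < T)
    (f : ℂ → ℂ) (U : Set ℂ) (hU : IsOpen U)
    (hdisk : {z : ℂ | ‖z‖ ≤ r} ⊆ U)
    (hf : DifferentiableOn ℂ f U)
    (hreal : ∀ x : ℝ, |x| ≤ r → (f (x : ℂ)).im = 0) :
    deriv f 0
      = (((2 / (r * T)) *
          ∫ t in (0 : ℝ)..T,
            (f ((r : ℂ) * Complex.exp ((2 * π * t / T : ℝ) * Complex.I))).re *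
              Real.cos (2 * π * t / T) : ℝ) : ℂ) :=
  deriv_from_real_part_cosine_general r T hr hT f U hdisk hf hreal
end

section
/- Let r > 0 and T > 0, and let f : ℂ → ℂ be complex-differentiable on an open set U ⊆ ℂ containing the closed disk {z : ℂ | ‖z‖ ≤ r}. Then the online estimate ∇̃(S) = (1/(S·r)) · ∫_{t=0}^{S} f(r·exp(2πi t / T)) · exp(−2πi t / T) dt converges, as S → ∞ (along the filter atTop on ℝ), to deriv f 0. -/
/-!
The integrand is `G (2π t / T)` with `G θ = f (r e^{iθ}) e^{-iθ}`, a continuous `2π`-periodic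
function. For a `T`-periodic `g`, the primitive `∫₀ˢ g` minus its linear drift `(S / T) ∫₀ᵀ g`
is continuous and periodic, hence bounded, so the running mean `S⁻¹ ∫₀ˢ g` tends to the mean
`T⁻¹ ∫₀ᵀ g` over one period. By the Cauchy integral formula for `f'(0)`, the mean of `G` over a
period is `r f'(0)`.
-/

open scoped Real
open Filter Topology MeasureTheory Function Complex Metric Set

namespace Function.Periodic

variable {E : Type*} [NormedAddCommGroup E] [NormedSpace ℝ E] {g : ℝ → E} {T : ℝ}

theorem periodic_intervalIntegral_sub_smul (hg : Periodic g T) (hT : T ≠ 0)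
    (hint : ∀ a b, IntervalIntegrable g volume a b) :
    Periodic (fun S => (∫ t in 0..S, g t) - (S / T) • ∫ t in 0..T, g t) T := by
  intro S
  simp only [hg.intervalIntegral_add_eq_add 0 S hint, zero_add, add_div, div_self hT, add_smul,
    one_smul]
  abel

theorem tendsto_inv_smul_intervalIntegral (hg : Periodic g T) (hT : 0 < T)
    (hint : IntervalIntegrable g volume 0 T) :
    Tendsto (fun S => S⁻¹ • ∫ t in 0..S, g t) atTop (𝓝 (T⁻¹ • ∫ t in 0..T, g t)) := by
  have hint_all : ∀ a b, IntervalIntegrable g volume a b :=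
    hg.intervalIntegrable hT.ne' (by rwa [zero_add])
  set rem := fun S => (∫ t in 0..S, g t) - (S / T) • ∫ t in 0..T, g t
  obtain ⟨C, hC⟩ := isBounded_iff_forall_norm_le.1 <|
    (hg.periodic_intervalIntegral_sub_smul hT.ne' hint_all).isBounded_of_continuous hT.ne'
      ((intervalIntegral.continuous_primitive hint_all 0).sub
        ((continuous_id.div_const T).smul continuous_const))
  have hrem_bdd : IsBoundedUnder (· ≤ ·) atTop (norm ∘ rem) :=
    isBoundedUnder_of ⟨C, fun S => hC _ (mem_range_self S)⟩
  have hrem_lim : Tendsto (fun S => S⁻¹ • rem S) atTop (𝓝 0) :=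
    tendsto_inv_atTop_zero.zero_smul_isBoundedUnder_le hrem_bdd
  have hlim := hrem_lim.const_add (T⁻¹ • ∫ t in 0..T, g t)
  rw [add_zero] at hlim
  refine hlim.congr' ?_
  filter_upwards [eventually_ne_atTop 0] with S hS
  rw [smul_sub, smul_smul, div_eq_mul_inv, inv_mul_cancel_left₀ hS, add_sub_cancel]

theorem tendsto_inv_smul_intervalIntegral_comp_mul (hg : Periodic g T) (hT : 0 < T)
    (hint : IntervalIntegrable g volume 0 T) {a : ℝ} (ha : 0 < a) :
    Tendsto (fun S => S⁻¹ • ∫ t in 0..S, g (a * t)) atTop (𝓝 (T⁻¹ • ∫ t in 0..T, g t)) := by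
  have hint_a : IntervalIntegrable (fun t => g (a * t)) volume 0 (a⁻¹ * T) := by
    simpa [div_eq_inv_mul] using hint.comp_mul_left (c := a)
  convert (hg.const_mul a).tendsto_inv_smul_intervalIntegral (by positivity) hint_a using 2
  rw [intervalIntegral.integral_comp_mul_left _ ha.ne', mul_zero, mul_inv_cancel_left₀ ha.ne',
    smul_smul, mul_inv_rev, inv_inv, mul_inv_cancel_right₀ ha.ne']

end Function.Periodic

theorem periodic_comp_circleMap_mul_exp_neg (f : ℂ → ℂ) (c : ℂ) (R : ℝ) :
    Periodic (fun θ : ℝ => f (circleMap c R θ) * exp (-(θ * I))) (2 * π) := by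
  intro θ
  simp only [periodic_circleMap c R θ]
  push_cast
  rw [show -((θ + 2 * π) * I) = -(θ * I) - 2 * π * I by ring, exp_sub, exp_two_pi_mul_I,
    div_one]

theorem integral_comp_circleMap_mul_exp_neg_eq_deriv {f : ℂ → ℂ} {c : ℂ} {R : ℝ}
    (hR : 0 < R) (hf : DifferentiableOn ℂ f (closedBall c R)) :
    ∫ θ in 0..2 * π, f (circleMap c R θ) * exp (-(θ * I)) = 2 * π * R * deriv f c := by
  have hCauchy := hf.deriv_eq_smul_circleIntegral hR
  have hR' : (R : ℂ) ≠ 0 := ofReal_ne_zero.2 hR.ne'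
  have hintegrand : ∀ θ : ℝ, deriv (circleMap c R) θ • (1 / (circleMap c R θ - c) ^ 2) •
      f (circleMap c R θ) = I / R * (f (circleMap c R θ) * exp (-(θ * I))) := by
    intro θ
    simp only [deriv_circleMap, circleMap_sub_center, circleMap_zero, smul_eq_mul, exp_neg]
    field_simp
  rw [circleIntegral] at hCauchy
  simp only [hintegrand, intervalIntegral.integral_const_mul] at hCauchy
  apply mul_left_cancel₀ (div_ne_zero I_ne_zero hR')
  rw [hCauchy, smul_eq_mul]
  field_simp

theorem online_estimate_tendsto_deriv_general
    (r T : ℝ) (hr : 0 < r) (hT : 0 < T)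
    (f : ℂ → ℂ) (U : Set ℂ)
    (hdisk : {z : ℂ | ‖z‖ ≤ r} ⊆ U)
    (hf : DifferentiableOn ℂ f U) :
    Filter.Tendsto
      (fun S : ℝ =>
        (1 / ((S : ℂ) * (r : ℂ))) *
          ∫ t in (0 : ℝ)..S,
            f ((r : ℂ) * Complex.exp ((2 * π * t / T : ℝ) * Complex.I)) *
              Complex.exp (-((2 * π * t / T : ℝ) * Complex.I)))
      Filter.atTop (nhds (deriv f 0)) := by
  have hf_ball : DifferentiableOn ℂ f (closedBall 0 r) :=
    hf.mono fun z hz => hdisk (by simpa using hz)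
  set G : ℝ → ℂ := fun θ => f (circleMap 0 r θ) * exp (-(θ * I))
  have hG_cont : Continuous G :=
    (hf_ball.continuousOn.comp_continuous (continuous_circleMap 0 r)
      (circleMap_mem_closedBall 0 hr.le)).mul (by fun_prop)
  have hG_mean : (2 * π)⁻¹ • ∫ θ in 0..2 * π, G θ = r * deriv f 0 := by
    rw [integral_comp_circleMap_mul_exp_neg_eq_deriv hr hf_ball, Complex.real_smul]
    push_cast
    field_simp
  have hG_avg :=
    (periodic_comp_circleMap_mul_exp_neg f 0 r).tendsto_inv_smul_intervalIntegral_comp_mul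
      (by positivity) (hG_cont.intervalIntegrable _ _) (a := 2 * π / T) (by positivity)
  rw [hG_mean] at hG_avg
  convert hG_avg.const_mul (r : ℂ)⁻¹ using 1
  · funext S
    simp only [circleMap_zero, Complex.real_smul, div_mul_eq_mul_div]
    push_cast
    ring
  · rw [inv_mul_cancel_left₀ (ofReal_ne_zero.2 hr.ne')]

/-- Convergence of the online gradient estimate of holomorphic equilibrium
propagation: averaging the first-harmonic-demodulated oscillating activity over ever
longer plasticity windows recovers the exact derivative at `0`. -/
theorem online_estimate_tendsto_deriv
    (r T : ℝ) (hr : 0 < r) (hT : 0 < T)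
    (f : ℂ → ℂ) (U : Set ℂ) (hU : IsOpen U)
    (hdisk : {z : ℂ | ‖z‖ ≤ r} ⊆ U)
    (hf : DifferentiableOn ℂ f U) :
    Filter.Tendsto
      (fun S : ℝ =>
        (1 / ((S : ℂ) * (r : ℂ))) *
          ∫ t in (0 : ℝ)..S,
            f ((r : ℂ) * Complex.exp ((2 * π * t / T : ℝ) * Complex.I)) *
              Complex.exp (-((2 * π * t / T : ℝ) * Complex.I)))
      Filter.atTop (nhds (deriv f 0)) :=
  online_estimate_tendsto_deriv_general r T hr hT f U hdisk hf
end
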